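/- Define G(t) = (1/2)·log(1/4 + t²) − 1/(4(1/4 + t²)) − (1/4 − t²)/(12(1/4 + t²)²) − √3·(arctan(2t) − 2t/(4t² + 1))/(72t³) − 2π·e^{−πt} − log(2π). Then G(t) > 0 for all t ≥ 6.29073. -/
import Mathlib


noncomputable def G (t : ℝ) : ℝ :=
  (1/2) * Real.log (1/4 + t ^ 2) - 1 / (4 * (1/4 + t ^ 2))
    - (1/4 - t ^ 2) / (12 * (1/4 + t ^ 2) ^ 2)
    - Real.sqrt 3 * (Real.arctan (2 * t) - 2 * t / (4 * t ^ 2 + 1)) / (72 * t ^ 3)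
    - 2 * Real.pi * Real.exp (-Real.pi * t) - Real.log (2 * Real.pi)

/-- For positive `v`, `v / (1 + v²) ≤ arctan v`. -/
lemma arctan_ge_aux (v : ℝ) (hv : 0 < v) : v / (1 + v ^ 2) ≤ Real.arctan v := by
  have hθ : 0 ≤ Real.arctan v := by
    have := Real.arctan_strictMono.monotone hv.le
    rwa [Real.arctan_zero] at this
  have h1 := Real.sin_le (by linarith : (0:ℝ) ≤ 2 * Real.arctan v)
  rw [Real.sin_two_mul, Real.sin_arctan, Real.cos_arctan] at h1
  have hpos : (0:ℝ) < 1 + v ^ 2 := by positivity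
  have hss : Real.sqrt (1 + v ^ 2) * Real.sqrt (1 + v ^ 2) = 1 + v ^ 2 :=
    Real.mul_self_sqrt hpos.le
  have key : v / Real.sqrt (1 + v ^ 2) * (1 / Real.sqrt (1 + v ^ 2)) = v / (1 + v ^ 2) := by
    rw [div_mul_div_comm, mul_one, hss]
  nlinarith [h1, key]

set_option maxHeartbeats 2000000 in
theorem G_pos (t : ℝ) (ht : 6.29073 ≤ t) : 0 < G t := by
  have ht0 : (0:ℝ) < t := by linarith
  have ht2 : (39.5732839329 : ℝ) ≤ t ^ 2 := by nlinarith
  have ht3 : (6.29073:ℝ) ^ 3 ≤ t ^ 3 := by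
    have := pow_le_pow_left₀ (by norm_num : (0:ℝ) ≤ 6.29073) ht 3
    linarith
  have hπu : Real.pi < 3.141593 := Real.pi_lt_d6
  have hπl : 3.141592 < Real.pi := Real.pi_gt_d6
  have hπ0 := Real.pi_pos
  have hs3u : Real.sqrt 3 < 1.7320509 := by
    rw [Real.sqrt_lt' (by norm_num)]; norm_num
  have hs3l : (1.7320508:ℝ) < Real.sqrt 3 := by
    rw [Real.lt_sqrt (by norm_num)]; norm_num
  set x : ℝ := 1/4 + t ^ 2 with hxdef
  have hx0 : (0:ℝ) < x := by positivity
  have hxge : (39.8232839329 : ℝ) ≤ x := by rw [hxdef]; linarith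
  -- Step 1 : lower bound for log x₀ - log (4π²)
  have hexpq : Real.exp 0.0086968 ≤ ((1 - 0.0086968/256 : ℝ)⁻¹) ^ (256:ℕ) := by
    have hsplit : Real.exp (0.0086968:ℝ) = Real.exp (0.0086968/256) ^ (256:ℕ) := by
      rw [← Real.exp_nat_mul]; norm_num
    rw [hsplit]
    apply pow_le_pow_left₀ (Real.exp_pos _).le _ 256
    have h1 := Real.add_one_le_exp (-(0.0086968/256 : ℝ))
    rw [Real.exp_neg] at h1
    have hpos : (0:ℝ) < 1 - 0.0086968/256 := by norm_num
    have hA := Real.exp_pos (0.0086968/256 : ℝ)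
    have key : Real.exp (0.0086968/256) * (1 - 0.0086968/256) ≤ 1 := by
      have h2 := mul_le_mul_of_nonneg_left h1 hA.le
      rw [mul_inv_cancel₀ hA.ne'] at h2
      nlinarith
    apply le_of_mul_le_mul_right _ hpos
    rw [inv_mul_cancel₀ hpos.ne']
    exact key
  have hq : Real.exp 0.0086968 * (4 * Real.pi ^ 2) ≤ 39.8232839329 := by
    have h4π : (4:ℝ) * Real.pi ^ 2 ≤ 4 * 3.141593 ^ 2 := by nlinarith
    calc Real.exp 0.0086968 * (4 * Real.pi ^ 2)
        ≤ ((1 - 0.0086968/256 : ℝ)⁻¹) ^ (256:ℕ) * (4 * 3.141593 ^ 2) := by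
          apply mul_le_mul hexpq h4π (by positivity) (by positivity)
      _ ≤ 39.8232839329 := by norm_num
  have hlog : Real.log (4 * Real.pi ^ 2) + 0.0086968 ≤ Real.log 39.8232839329 := by
    have h1 : Real.log (Real.exp 0.0086968 * (4 * Real.pi ^ 2)) ≤ Real.log 39.8232839329 :=
      Real.log_le_log (by positivity) hq
    rwa [Real.log_mul (Real.exp_ne_zero _) (by positivity), Real.log_exp, add_comm] at h1
  have hlog2π : Real.log (4 * Real.pi ^ 2) = 2 * Real.log (2 * Real.pi) := by
    rw [show (4:ℝ) * Real.pi ^ 2 = (2 * Real.pi) ^ (2:ℕ) by ring, Real.log_pow]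
    norm_num
  -- Step 2 : monotone part, (1/2) log x + 1/(12x) + a/t⁴
  have hl : Real.log 39.8232839329 - Real.log x ≤ 39.8232839329 / x - 1 := by
    have h := Real.log_le_sub_one_of_pos (show (0:ℝ) < 39.8232839329 / x by positivity)
    rwa [Real.log_div (by norm_num) hx0.ne'] at h
  have hpoly : 0 ≤ (1/2) * (1 - 39.8232839329 / x) + 1/(12*x) - 1/(12*39.8232839329)
      + 0.0239/t^4 - 0.0239/6.29073^4 := by
    have e1 : (1/2) * (1 - 39.8232839329 / x) + 1/(12*x) - 1/(12*39.8232839329)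
        + 0.0239/t^4 - 0.0239/6.29073^4
        = ((x - 39.8232839329) * (6*39.8232839329 - 1) * (t^4 * 6.29073^4)
            - 12 * 0.0239 * x * 39.8232839329 * (t^4 - 6.29073^4))
          / (12 * x * 39.8232839329 * (t^4 * 6.29073^4)) := by
      field_simp
      ring
    rw [e1]
    apply div_nonneg _ (by positivity)
    have hfac : (x - 39.8232839329) * (6*39.8232839329 - 1) * (t^4 * 6.29073^4)
            - 12 * 0.0239 * x * 39.8232839329 * (t^4 - 6.29073^4)
        = (t^2 - 39.5732839329) *
            ((6*39.8232839329 - 1) * 6.29073^4 * t^4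
              - 12 * 0.0239 * (1/4 + t^2) * 39.8232839329 * (t^2 + 39.5732839329)) := by
      rw [hxdef]; ring
    rw [hfac]
    have h1 : (0:ℝ) ≤ t^2 - 39.5732839329 := by linarith
    have h2 : (0:ℝ) ≤ (6*39.8232839329 - 1) * 6.29073^4 * t^4
              - 12 * 0.0239 * (1/4 + t^2) * 39.8232839329 * (t^2 + 39.5732839329) := by
      nlinarith [sq_nonneg t, sq_nonneg (t^2), mul_nonneg h1 h1, mul_nonneg h1 (sq_nonneg t)]
    exact mul_nonneg h1 h2
  have hL2 : (1/2) * Real.log x + 1/(12*x) + 0.0239/t^4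
      ≥ (1/2) * Real.log 39.8232839329 + 1/(12*39.8232839329) + 0.0239/6.29073^4 := by
    linarith [hl, hpoly]
  -- Step 3 : arctan term
  have harc : Real.arctan (2*t) ≤ Real.pi/2 - 2*t/(4*t^2+1) := by
    have hinv : Real.arctan ((2*t)⁻¹) = Real.pi/2 - Real.arctan (2*t) :=
      Real.arctan_inv_of_pos (by linarith)
    have hlow := arctan_ge_aux ((2*t)⁻¹) (by positivity)
    have he : ((2*t)⁻¹) / (1 + ((2*t)⁻¹) ^ 2) = 2*t/(4*t^2+1) := by
      rw [inv_eq_one_div]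
      field_simp
      ring
    rw [he, hinv] at hlow
    linarith
  have hD1 : Real.sqrt 3 * (Real.pi/2) / (72*t^3)
      ≤ 1.7320509 * 3.141593 / (144 * 6.29073^3) := by
    rw [div_le_div_iff₀ (by positivity) (by norm_num)]
    have hM1 : Real.sqrt 3 * Real.pi ≤ 1.7320509 * 3.141593 := by
      nlinarith [Real.sqrt_nonneg 3]
    have p1 : (0:ℝ) ≤ (1.7320509 * 3.141593 - Real.sqrt 3 * Real.pi) * t^3 := by
      apply mul_nonneg (by linarith) (by positivity)
    have p2 : (0:ℝ) ≤ (Real.sqrt 3 * Real.pi) * (t^3 - 6.29073^3) := by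
      apply mul_nonneg (by positivity) (by linarith)
    nlinarith [p1, p2]
  have hD2 : 0.0239/t^4 ≤ Real.sqrt 3 * (4*t/(4*t^2+1)) / (72*t^3) := by
    have e : Real.sqrt 3 * (4*t/(4*t^2+1)) / (72*t^3)
        = Real.sqrt 3 * t / (18*t^3*(4*t^2+1)) := by
      field_simp
      ring
    rw [e, div_le_div_iff₀ (by positivity) (by positivity)]
    have h1 : (0:ℝ) ≤ t^2 - 39.5732839329 := by linarith
    have p1 : (0:ℝ) ≤ (t^2 - 39.5732839329) * t^3 := mul_nonneg h1 (by positivity)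
    have p2 : (0:ℝ) ≤ (Real.sqrt 3 - 1.7320508) * (t^5) := by
      apply mul_nonneg (by linarith) (by positivity)
    nlinarith [p1, p2]
  have hD : Real.sqrt 3 * (Real.arctan (2*t) - 2*t/(4*t^2+1)) / (72*t^3)
      ≤ 1.7320509 * 3.141593 / (144 * 6.29073^3) - 0.0239/t^4 := by
    have hden : (0:ℝ) < 72*t^3 := by positivity
    have step1 : Real.sqrt 3 * (Real.arctan (2*t) - 2*t/(4*t^2+1)) / (72*t^3)
        ≤ (Real.sqrt 3 * (Real.pi/2) - Real.sqrt 3 * (4*t/(4*t^2+1))) / (72*t^3) := by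
      apply (div_le_div_iff_of_pos_right hden).mpr
      have h4 : (4:ℝ)*t/(4*t^2+1) = 2*(2*t/(4*t^2+1)) := by ring
      have hDnum := mul_le_mul_of_nonneg_left
        (show Real.arctan (2*t) - 2*t/(4*t^2+1) ≤ Real.pi/2 - 4*t/(4*t^2+1) by
          rw [h4]; linarith)
        (Real.sqrt_nonneg 3)
      nlinarith [hDnum]
    rw [sub_div] at step1
    linarith [hD1, hD2, step1]
  -- Step 4 : exponential term
  have hE : 2 * Real.pi * Real.exp (-Real.pi * t) ≤ 2 * 3.141593 / 2.7^19 := by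
    have hpt : (19:ℝ) ≤ Real.pi * t := by
      have p1 : (0:ℝ) ≤ (Real.pi - 3.141592) * t := mul_nonneg (by linarith) ht0.le
      nlinarith [p1]
    have hexpt : Real.exp (-Real.pi * t) ≤ Real.exp (-19) := by
      apply Real.exp_le_exp.mpr; linarith
    have h19 : Real.exp (-19:ℝ) ≤ 1 / 2.7^19 := by
      rw [Real.exp_neg, one_div]
      apply inv_anti₀ (by norm_num)
      have h2 : Real.exp (19:ℝ) = Real.exp 1 ^ (19:ℕ) := by
        rw [← Real.exp_nat_mul]; norm_num
      rw [h2]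
      apply pow_le_pow_left₀ (by norm_num)
      linarith [Real.exp_one_gt_d9]
    calc 2 * Real.pi * Real.exp (-Real.pi * t)
        ≤ 2 * 3.141593 * (1 / 2.7^19) := by
          apply mul_le_mul (by linarith) (hexpt.trans h19) (Real.exp_pos _).le (by norm_num)
      _ = 2 * 3.141593 / 2.7^19 := by ring
  -- Step 5 : elementary monotone bounds
  have hB : 1/(4*x) ≤ 1/(4*39.8232839329) :=
    one_div_le_one_div_of_le (by norm_num) (by linarith)
  have hC : 1/(24*x^2) ≤ 1/(24*39.8232839329^2) := by
    apply one_div_le_one_div_of_le (by norm_num)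
    nlinarith [hxge]
  -- Step 6 : final numeric inequality
  have hN : (0:ℝ) < 0.0086968/2 + 1/(12*39.8232839329) + 0.0239/6.29073^4
      - 1/(4*39.8232839329) - 1/(24*39.8232839329^2)
      - 1.7320509 * 3.141593 / (144 * 6.29073^3) - 2 * 3.141593 / 2.7^19 := by
    norm_num
  -- assemble
  have hCterm : (1/4 - t^2)/(12*x^2) = 1/(24*x^2) - 1/(12*x) := by
    have e : (1/4 - t^2 : ℝ) = 1/2 - x := by rw [hxdef]; ring
    rw [e]
    field_simp
    ring
  have hG : G t = (1/2) * Real.log x - 1/(4*x) - (1/(24*x^2) - 1/(12*x))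
      - Real.sqrt 3 * (Real.arctan (2*t) - 2*t/(4*t^2+1)) / (72*t^3)
      - 2 * Real.pi * Real.exp (-Real.pi * t) - Real.log (2 * Real.pi) := by
    rw [G, ← hCterm, hxdef]
  rw [hG]
  linarith [hL2, hD, hE, hB, hC, hlog, hlog2π, hN]
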